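/- Let F be an irreducible, weakly viable consular election rule satisfying SPP and SPO. Then every vertex of the range graph 𝒢(F) belongs to a 3-cycle: for every a ∈ A there exist b, c ∈ A such that {a,b}, {b,c} and {a,c} are all edges of 𝒢(F). Moreover, every edge of 𝒢(F) lies in a 3-cycle: if {a,b} is an edge of 𝒢(F), then there exists c ∈ A such that {a,c} and {b,c} are also edges of 𝒢(F). -/

import Mathlib

open Function

/-- A ballot is a strict linear order on the set of alternatives. -/
abbrev Ballot (A : Type*) := LinearOrder A

/-- A profile assigns a ballot to each voter. -/
abbrev Profile (V A : Type*) := V → Ballot A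

variable {V A : Type*}

/-- The best (greatest) element of `W` under ballot `L` (junk value if `W` is empty). -/
noncomputable def bestIn [Nonempty A] (L : Ballot A) (W : Finset A) : A :=
  if h : W.Nonempty then @Finset.max' A L W h else Classical.arbitrary A

/-- The worst (least) element of `W` under ballot `L` (junk value if `W` is empty). -/
noncomputable def worstIn [Nonempty A] (L : Ballot A) (W : Finset A) : A :=
  if h : W.Nonempty then @Finset.min' A L W h else Classical.arbitrary A

/-- Strategy-proofness for optimists. -/
def SPO [DecidableEq V] [Nonempty A] (F : Profile V A → Finset A) : Prop :=
  ∀ (P : Profile V A) (i : V) (Pi' : Ballot A),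
    (P i).le (bestIn (P i) (F (Function.update P i Pi'))) (bestIn (P i) (F P))

/-- Strategy-proofness for pessimists. -/
def SPP [DecidableEq V] [Nonempty A] (F : Profile V A → Finset A) : Prop :=
  ∀ (P : Profile V A) (i : V) (Pi' : Ballot A),
    (P i).le (worstIn (P i) (F (Function.update P i Pi'))) (worstIn (P i) (F P))

/-- `F` is weakly viable if every alternative is on some winning committee. -/
def WeaklyViable (F : Profile V A → Finset A) : Prop :=
  ∀ a : A, ∃ P : Profile V A, a ∈ F P

/-- `F` is Marian if some alternative is on every winning committee. -/
def Marian (F : Profile V A → Finset A) : Prop :=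
  ∃ m : A, ∀ P : Profile V A, m ∈ F P

/-- restriction of a ballot to a subset of alternatives -/
def restrictBallot (L : Ballot A) (B : Finset A) : Ballot {x // x ∈ B} :=
  @LinearOrder.lift' _ A L (fun x => (x : A)) Subtype.val_injective

/-- A consular rule is reducible if it is the disjoint union of two social choice functions. -/
def Reducible [Fintype A] [DecidableEq A] (F : Profile V A → Finset A) : Prop :=
  ∃ B C : Finset A, B.Nonempty ∧ C.Nonempty ∧ Disjoint B C ∧ B ∪ C = Finset.univ ∧
    ∃ (G : Profile V {x // x ∈ B} → {x // x ∈ B}) (H : Profile V {x // x ∈ C} → {x // x ∈ C}),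
      ∀ P : Profile V A,
        F P = {((G (fun i => restrictBallot (P i) B)) : A), ((H (fun i => restrictBallot (P i) C)) : A)}

/-- The range graph of a consular election rule. -/
def rangeGraph [DecidableEq A] (F : Profile V A → Finset A) : SimpleGraph A where
  Adj a b := a ≠ b ∧ ∃ P : Profile V A, F P = {a, b}
  symm := by
    constructor
    rintro a b ⟨hab, P, hP⟩
    exact ⟨hab.symm, P, by rwa [Finset.pair_comm]⟩
  loopless := by constructor; rintro a ⟨h, -⟩; exact h rfl

/-- `t` is ranked immediately above `s` in ballot `L`. -/
def JustAbove (L : Ballot A) (s t : A) : Prop :=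
  L.lt s t ∧ ∀ z, ¬ (L.lt s z ∧ L.lt z t)

/-- The ballot obtained from `L` by transposing the alternatives `s` and `t`. -/
def swapBallot [DecidableEq A] (L : Ballot A) (s t : A) : Ballot A :=
  @LinearOrder.lift' A A L (Equiv.swap s t) (Equiv.injective _)

/-- `L'` is obtained from `L` by moving `s` up. -/
def MovedUp (L L' : Ballot A) (s : A) : Prop :=
  (∀ x y, x ≠ s → y ≠ s → (L'.lt x y ↔ L.lt x y)) ∧ ∀ x, L.lt x s → L'.lt x s

/-- `L'` is obtained from `L` by moving `s` down. -/
def MovedDown (L L' : Ballot A) (s : A) : Prop :=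
  (∀ x y, x ≠ s → y ≠ s → (L'.lt x y ↔ L.lt x y)) ∧ ∀ x, L.lt s x → L'.lt s x

/-- Strategy-proofness of a single-winner social choice function. -/
def SCFStrategyProof {B : Type*} [DecidableEq V] (G : Profile V B → B) : Prop :=
  ∀ (Q : Profile V B) (i : V) (Qi' : Ballot B),
    (Q i).le (G (Function.update Q i Qi')) (G Q)

/-- Edge-connectivity of a graph. -/
def EdgeConnectivity {X : Type*} (G : SimpleGraph X) : Prop :=
  ∀ a b c d : X, G.Adj a b → G.Adj c d → a ≠ c → a ≠ d → b ≠ c → b ≠ d →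
    (G.Adj a c ∨ G.Adj a d) ∧ (G.Adj b c ∨ G.Adj b d)


section AuxOrder

variable {A : Type*}

theorem blt_trans (L : Ballot A) {x y z : A} (h1 : L.lt x y) (h2 : L.lt y z) : L.lt x z := by
  letI := L; exact lt_trans h1 h2

theorem blt_asymm (L : Ballot A) {x y : A} (h1 : L.lt x y) (h2 : L.lt y x) : False := by
  letI := L; exact lt_asymm h1 h2

theorem blt_irrefl (L : Ballot A) {x : A} (h : L.lt x x) : False := by
  letI := L; exact lt_irrefl x h

theorem blt_ne (L : Ballot A) {x y : A} (h : L.lt x y) : x ≠ y := by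
  letI := L; exact ne_of_lt h

theorem blt_trichotomy (L : Ballot A) (x y : A) : L.lt x y ∨ x = y ∨ L.lt y x := by
  letI := L; exact lt_trichotomy x y

theorem blt_of_ble (L : Ballot A) {x y : A} (h : L.le x y) (hne : x ≠ y) : L.lt x y := by
  letI := L; exact lt_of_le_of_ne h hne

theorem ble_blt_absurd (L : Ballot A) {x y : A} (h : L.le x y) (h2 : L.lt y x) : False := by
  letI := L; exact absurd h (not_le_of_gt h2)

end AuxOrder

section AuxBest

variable {A : Type*} [Nonempty A] [DecidableEq A]

theorem bestIn_mem (L : Ballot A) {W : Finset A} (h : W.Nonempty) : bestIn L W ∈ W := by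
  rw [bestIn, dif_pos h]; exact @Finset.max'_mem A L W h

theorem le_bestIn (L : Ballot A) {W : Finset A} {x : A} (hx : x ∈ W) : L.le x (bestIn L W) := by
  rw [bestIn, dif_pos ⟨x, hx⟩]; exact @Finset.le_max' A L W x hx

theorem worstIn_mem (L : Ballot A) {W : Finset A} (h : W.Nonempty) : worstIn L W ∈ W := by
  rw [worstIn, dif_pos h]; exact @Finset.min'_mem A L W h

theorem worstIn_le (L : Ballot A) {W : Finset A} {x : A} (hx : x ∈ W) : L.le (worstIn L W) x := by
  rw [worstIn, dif_pos ⟨x, hx⟩]; exact @Finset.min'_le A L W x hx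

theorem bestIn_pair (L : Ballot A) {u v : A} (h : L.lt u v) : bestIn L ({u, v} : Finset A) = v := by
  have hne : ({u, v} : Finset A).Nonempty := ⟨u, by simp⟩
  have hm := bestIn_mem L hne
  rcases Finset.mem_insert.mp hm with h1 | h1
  · exfalso
    have h2 := le_bestIn L (W := {u, v}) (x := v) (by simp)
    rw [h1] at h2
    exact ble_blt_absurd L h2 h
  · exact Finset.mem_singleton.mp h1

theorem worstIn_pair (L : Ballot A) {u v : A} (h : L.lt u v) : worstIn L ({u, v} : Finset A) = u := by
  have hne : ({u, v} : Finset A).Nonempty := ⟨u, by simp⟩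
  have hm := worstIn_mem L hne
  rcases Finset.mem_insert.mp hm with h1 | h1
  · exact h1
  · exfalso
    have h2 := worstIn_le L (W := {u, v}) (x := u) (by simp)
    rw [Finset.mem_singleton.mp h1] at h2
    exact ble_blt_absurd L h2 h

theorem bestIn_pair' (L : Ballot A) {u v : A} (h : L.lt v u) : bestIn L ({u, v} : Finset A) = u := by
  rw [Finset.pair_comm]; exact bestIn_pair L h

theorem worstIn_pair' (L : Ballot A) {u v : A} (h : L.lt v u) : worstIn L ({u, v} : Finset A) = v := by
  rw [Finset.pair_comm]; exact worstIn_pair L h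

theorem pair_struct (L : Ballot A) {W : Finset A} (h : W.card = 2) :
    L.lt (worstIn L W) (bestIn L W) ∧ W = {bestIn L W, worstIn L W} := by
  obtain ⟨u, v, huv, rfl⟩ := Finset.card_eq_two.mp h
  rcases blt_trichotomy L u v with h1 | h1 | h1
  · rw [bestIn_pair L h1, worstIn_pair L h1]
    exact ⟨h1, Finset.pair_comm u v⟩
  · exact absurd h1 huv
  · rw [bestIn_pair' L h1, worstIn_pair' L h1]
    exact ⟨h1, rfl⟩

theorem mem_best_or_worst (L : Ballot A) {W : Finset A} (h : W.card = 2) {x : A} (hx : x ∈ W) :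
    x = bestIn L W ∨ x = worstIn L W := by
  have h2 := (pair_struct L h).2
  rw [h2] at hx
  rcases Finset.mem_insert.mp hx with h3 | h3
  · exact Or.inl h3
  · exact Or.inr (Finset.mem_singleton.mp h3)

theorem mem_card_two {S : Finset A} (h : S.card = 2) {x : A} (hx : x ∈ S) :
    ∃ w, w ≠ x ∧ S = {x, w} := by
  obtain ⟨u, v, huv, rfl⟩ := Finset.card_eq_two.mp h
  rcases Finset.mem_insert.mp hx with rfl | hxv
  · exact ⟨v, fun hvx => huv hvx.symm, rfl⟩
  · rw [Finset.mem_singleton.mp hxv]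
    exact ⟨u, fun h' => huv h', Finset.pair_comm u v⟩

theorem bestIn_congr (L L' : Ballot A) {W : Finset A} (h : W.card = 2)
    (hag : ∀ x ∈ W, ∀ y ∈ W, L'.lt x y ↔ L.lt x y) :
    bestIn L' W = bestIn L W ∧ worstIn L' W = worstIn L W := by
  obtain ⟨u, v, huv, rfl⟩ := Finset.card_eq_two.mp h
  have hu : u ∈ ({u, v} : Finset A) := by simp
  have hv : v ∈ ({u, v} : Finset A) := by simp
  rcases blt_trichotomy L u v with h1 | h1 | h1
  · have h1' : L'.lt u v := (hag u hu v hv).mpr h1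
    rw [bestIn_pair L h1, worstIn_pair L h1, bestIn_pair L' h1', worstIn_pair L' h1']
    exact ⟨rfl, rfl⟩
  · exact absurd h1 huv
  · have h1' : L'.lt v u := (hag v hv u hu).mpr h1
    rw [bestIn_pair' L h1, worstIn_pair' L h1, bestIn_pair' L' h1', worstIn_pair' L' h1']
    exact ⟨rfl, rfl⟩

end AuxBest

set_option linter.unusedSectionVars false

section SwapPairSec

variable {A : Type*}

/-- `L'` is obtained from `L` by transposing the adjacent pair `s < t`. -/
def SwapPair (L L' : Ballot A) (s t : A) : Prop :=
  L.lt s t ∧ L'.lt t s ∧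
    ∀ x y : A, ¬(x = s ∧ y = t) → ¬(x = t ∧ y = s) → (L'.lt x y ↔ L.lt x y)

theorem SwapPair.ne {L L' : Ballot A} {s t : A} (h : SwapPair L L' s t) : s ≠ t :=
  blt_ne L h.1

theorem SwapPair.symm {L L' : Ballot A} {s t : A} (h : SwapPair L L' s t) :
    SwapPair L' L t s :=
  ⟨h.2.1, h.1, fun x y h1 h2 => (h.2.2 x y h2 h1).symm⟩

theorem SwapPair.carry {L L' : Ballot A} {s t : A} (h : SwapPair L L' s t) {x y : A}
    (hx : x ≠ s ∨ y ≠ t) (hy : x ≠ t ∨ y ≠ s) : (L'.lt x y ↔ L.lt x y) :=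
  h.2.2 x y (fun hc => hx.elim (fun h' => h' hc.1) (fun h' => h' hc.2))
    (fun hc => hy.elim (fun h' => h' hc.1) (fun h' => h' hc.2))

theorem SwapPair.adj {L L' : Ballot A} {s t : A} (h : SwapPair L L' s t) (z : A) :
    ¬(L.lt s z ∧ L.lt z t) := by
  rintro ⟨h1, h2⟩
  have hzs : z ≠ s := fun he => blt_irrefl L (he ▸ h1)
  have hzt : z ≠ t := blt_ne L h2
  have e1 : L'.lt s z := (h.carry (Or.inr hzt) (Or.inl h.ne)).mpr h1
  have e2 : L'.lt z t := (h.carry (Or.inl hzs) (Or.inl hzt)).mpr h2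
  exact blt_asymm L' (blt_trans L' e1 e2) h.2.1

end SwapPairSec

section Core

variable {V A : Type*} [DecidableEq V] [Nonempty A] [DecidableEq A]
variable {F : Profile V A → Finset A}

theorem core_ineqs (hSPO : SPO F) (hSPP : SPP F) (P : Profile V A) (i : V) (L' : Ballot A) :
    (P i).le (bestIn (P i) (F (Function.update P i L'))) (bestIn (P i) (F P)) ∧
    (P i).le (worstIn (P i) (F (Function.update P i L'))) (worstIn (P i) (F P)) ∧
    L'.le (bestIn L' (F P)) (bestIn L' (F (Function.update P i L'))) ∧
    L'.le (worstIn L' (F P)) (worstIn L' (F (Function.update P i L'))) := by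
  refine ⟨hSPO P i L', hSPP P i L', ?_, ?_⟩
  · have h := hSPO (Function.update P i L') i (P i)
    rwa [Function.update_idem, Function.update_eq_self, Function.update_self] at h
  · have h := hSPP (Function.update P i L') i (P i)
    rwa [Function.update_idem, Function.update_eq_self, Function.update_self] at h

theorem core_step1 (hcomm : ∀ P, (F P).card = 2) (hSPO : SPO F) (hSPP : SPP F)
    (P : Profile V A) (i : V) (L' : Ballot A) {s t : A} (hsw : SwapPair (P i) L' s t) :
    ∀ x ∈ F P, x ≠ s → x ≠ t → x ∈ F (Function.update P i L') := by
  intro x hxS hxs hxt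
  by_contra hxT
  obtain ⟨I1, I2, I3, I4⟩ := core_ineqs hSPO hSPP P i L'
  set L := P i with hL
  set S := F P with hS
  set T := F (Function.update P i L') with hT
  have hS2 : S.card = 2 := hcomm P
  have hT2 : T.card = 2 := hcomm (Function.update P i L')
  have hTne : T.Nonempty := Finset.card_pos.mp (by omega)
  obtain ⟨w, hwx, hSxw⟩ := mem_card_two hS2 hxS
  have hagS : ∀ p ∈ S, ∀ q ∈ S, L'.lt p q ↔ L.lt p q := by
    intro p hp q hq
    rw [hSxw] at hp hq
    refine hsw.2.2 p q ?_ ?_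
    · rintro ⟨rfl, rfl⟩
      rcases Finset.mem_insert.mp hp with h1 | h1
      · exact hxs h1.symm
      · rcases Finset.mem_insert.mp hq with h2 | h2
        · exact hxt h2.symm
        · exact hsw.ne ((Finset.mem_singleton.mp h1).trans (Finset.mem_singleton.mp h2).symm)
    · rintro ⟨rfl, rfl⟩
      rcases Finset.mem_insert.mp hp with h1 | h1
      · exact hxt h1.symm
      · rcases Finset.mem_insert.mp hq with h2 | h2
        · exact hxs h2.symm
        · exact hsw.ne ((Finset.mem_singleton.mp h2).trans (Finset.mem_singleton.mp h1).symm)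
  have hbS := bestIn_congr L L' hS2 hagS
  rcases mem_best_or_worst L hS2 hxS with hxb | hxw
  · -- x is the best of S under L
    have h1 : L.lt (bestIn L T) x :=
      blt_of_ble L (hxb ▸ I1) (fun he => hxT (he ▸ bestIn_mem L hTne))
    by_cases hstT : s ∈ T ∧ t ∈ T
    · have hTst : T = {s, t} :=
        (Finset.eq_of_subset_of_card_le
          (by intro z hz
              rcases Finset.mem_insert.mp hz with rfl | hz
              · exact hstT.1
              · rw [Finset.mem_singleton.mp hz]; exact hstT.2)
          (by rw [hT2, Finset.card_pair hsw.ne])).symm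
    -- hTst2 (eq_of_subset... gives {s,t} ⊆ T and T.card ≤ card {s,t} : T = {s,t})
      have hbT : bestIn L T = t := by rw [hTst]; exact bestIn_pair L hsw.1
      have hbT' : bestIn L' T = s := by rw [hTst]; exact bestIn_pair' L' hsw.2.1
      have h3 : L'.lt x s := by
        refine blt_of_ble L' ?_ hxs
        rw [← hbT', hxb, ← hbS.1]
        exact I3
      have h4 : L.lt x s := (hsw.carry (Or.inl hxs) (Or.inl hxt)).mp h3
      rw [hbT] at h1
      exact blt_asymm L (blt_trans L h1 h4) hsw.1
    · have hagT : ∀ p ∈ T, ∀ q ∈ T, L'.lt p q ↔ L.lt p q := by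
        intro p hp q hq
        refine hsw.2.2 p q ?_ ?_
        · rintro ⟨rfl, rfl⟩; exact hstT ⟨hp, hq⟩
        · rintro ⟨rfl, rfl⟩; exact hstT ⟨hq, hp⟩
      have hbT := bestIn_congr L L' hT2 hagT
      have h5 : L'.lt x (bestIn L' T) := by
        refine blt_of_ble L' ?_ ?_
        · rw [hxb, ← hbS.1]; exact I3
        · rw [hbT.1]
          exact fun he => hxT (he ▸ bestIn_mem L hTne)
      have h6 : L.lt x (bestIn L T) := by
        rw [hbT.1] at h5
        exact (hsw.carry (Or.inl hxs) (Or.inl hxt)).mp h5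
      exact blt_asymm L h1 h6
  · -- x is the worst of S under L
    have h1 : L.lt (worstIn L T) x :=
      blt_of_ble L (hxw ▸ I2) (fun he => hxT (he ▸ worstIn_mem L hTne))
    by_cases hstT : s ∈ T ∧ t ∈ T
    · have hTst : T = {s, t} :=
        (Finset.eq_of_subset_of_card_le
          (by intro z hz
              rcases Finset.mem_insert.mp hz with rfl | hz
              · exact hstT.1
              · rw [Finset.mem_singleton.mp hz]; exact hstT.2)
          (by rw [hT2, Finset.card_pair hsw.ne])).symm
      have hwT : worstIn L T = s := by rw [hTst]; exact worstIn_pair L hsw.1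
      have hwT' : worstIn L' T = t := by rw [hTst]; exact worstIn_pair' L' hsw.2.1
      have h3 : L'.lt x t := by
        refine blt_of_ble L' ?_ hxt
        rw [← hwT', hxw, ← hbS.2]
        exact I4
      have h4 : L.lt x t := (hsw.carry (Or.inl hxs) (Or.inl hxt)).mp h3
      rw [hwT] at h1
      exact hsw.adj x ⟨h1, h4⟩
    · have hagT : ∀ p ∈ T, ∀ q ∈ T, L'.lt p q ↔ L.lt p q := by
        intro p hp q hq
        refine hsw.2.2 p q ?_ ?_
        · rintro ⟨rfl, rfl⟩; exact hstT ⟨hp, hq⟩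
        · rintro ⟨rfl, rfl⟩; exact hstT ⟨hq, hp⟩
      have hbT := bestIn_congr L L' hT2 hagT
      have h5 : L'.lt x (worstIn L' T) := by
        refine blt_of_ble L' ?_ ?_
        · rw [hxw, ← hbS.2]; exact I4
        · rw [hbT.2]
          exact fun he => hxT (he ▸ worstIn_mem L hTne)
      have h6 : L.lt x (worstIn L T) := by
        rw [hbT.2] at h5
        exact (hsw.carry (Or.inl hxs) (Or.inl hxt)).mp h5
      exact blt_asymm L h1 h6

theorem core_step4 (hcomm : ∀ P, (F P).card = 2) (hSPO : SPO F) (hSPP : SPP F)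
    (P : Profile V A) (i : V) (L' : Ballot A) {s t w : A} (hsw : SwapPair (P i) L' s t)
    (hws : w ≠ s) (hwt : w ≠ t)
    (hS : F P = {s, w}) (hT : F (Function.update P i L') = {t, w}) : False := by
  obtain ⟨I1, I2, _, _⟩ := core_ineqs hSPO hSPP P i L'
  set L := P i with hL
  rw [hS, hT] at I1 I2
  rcases blt_trichotomy L w s with h1 | h1 | h1
  · have h2 : L.lt w t := blt_trans L h1 hsw.1
    rw [bestIn_pair' L h1, bestIn_pair' L h2] at I1
    exact ble_blt_absurd L I1 hsw.1
  · exact hws h1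
  · rcases blt_trichotomy L w t with h2 | h2 | h2
    · exact hsw.adj w ⟨h1, h2⟩
    · exact hwt h2
    · rw [worstIn_pair L h1, worstIn_pair L h2] at I2
      exact ble_blt_absurd L I2 hsw.1

theorem core (hcomm : ∀ P, (F P).card = 2) (hSPO : SPO F) (hSPP : SPP F)
    (P : Profile V A) (i : V) (L' : Ballot A) {s t : A} (hsw : SwapPair (P i) L' s t) :
    F (Function.update P i L') = F P ∨
      (t ∈ F P ∧ s ∉ F P ∧ F (Function.update P i L') = insert s ((F P).erase t)) := by
  have hswr : SwapPair ((Function.update P i L') i) (P i) t s := by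
    rw [Function.update_self]; exact hsw.symm
  have hrev : ∀ x ∈ F (Function.update P i L'), x ≠ t → x ≠ s → x ∈ F P := by
    have h := core_step1 hcomm hSPO hSPP (Function.update P i L') i (P i) hswr
    rwa [Function.update_idem, Function.update_eq_self] at h
  have hfwd := core_step1 hcomm hSPO hSPP P i L' hsw
  have hS2 := hcomm P
  have hT2 := hcomm (Function.update P i L')
  by_cases hsS : s ∈ F P <;> by_cases htS : t ∈ F P
  · -- both s,t ∈ F P
    left
    have hsub : F (Function.update P i L') ⊆ F P := by
      intro z hz
      by_cases hzs : z = s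
      · rw [hzs]; exact hsS
      by_cases hzt : z = t
      · rw [hzt]; exact htS
      · exact hrev z hz hzt hzs
    exact Finset.eq_of_subset_of_card_le hsub (by rw [hS2, hT2])
  · -- s ∈ F P, t ∉ F P : no change
    obtain ⟨w, hws, hSw⟩ := mem_card_two hS2 hsS
    have hwt : w ≠ t := fun he => htS (by rw [← he, hSw]; simp)
    have hwT : w ∈ F (Function.update P i L') := hfwd w (by rw [hSw]; simp) hws hwt
    obtain ⟨z, hzw, hTw⟩ := mem_card_two hT2 hwT
    by_cases hzs : z = s
    · left; rw [hTw, hzs, hSw, Finset.pair_comm]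
    by_cases hzt : z = t
    · exact absurd (core_step4 hcomm hSPO hSPP P i L' hsw hws hwt hSw
        (by rw [hTw, hzt, Finset.pair_comm])) not_false
    · exfalso
      have hzS := hrev z (by rw [hTw]; simp) hzt hzs
      rw [hSw] at hzS
      rcases Finset.mem_insert.mp hzS with h | h
      · exact hzs h
      · exact hzw (Finset.mem_singleton.mp h)
  · -- t ∈ F P, s ∉ F P
    obtain ⟨w, hwt, hSw⟩ := mem_card_two hS2 htS
    have hws : w ≠ s := fun he => hsS (by rw [← he, hSw]; simp)
    have hwT : w ∈ F (Function.update P i L') := hfwd w (by rw [hSw]; simp) hws hwt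
    obtain ⟨z, hzw, hTw⟩ := mem_card_two hT2 hwT
    by_cases hzt : z = t
    · left; rw [hTw, hzt, hSw, Finset.pair_comm]
    by_cases hzs : z = s
    · right
      refine ⟨htS, hsS, ?_⟩
      have herase : (F P).erase t = {w} := by
        rw [hSw]
        exact Finset.erase_insert (Finset.notMem_singleton.mpr (fun h => hwt h.symm))
      rw [herase, hTw, hzs, Finset.pair_comm]
    · exfalso
      have hzS := hrev z (by rw [hTw]; simp) hzt hzs
      rw [hSw] at hzS
      rcases Finset.mem_insert.mp hzS with h | h
      · exact hzt h
      · exact hzw (Finset.mem_singleton.mp h)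
  · -- neither
    left
    have hsub : F P ⊆ F (Function.update P i L') :=
      fun x hx => hfwd x hx (fun he => hsS (he ▸ hx)) (fun he => htS (he ▸ hx))
    exact (Finset.eq_of_subset_of_card_le hsub (by rw [hS2, hT2])).symm

end Core

section Chains

variable {V A : Type*} [DecidableEq V] [Nonempty A] [DecidableEq A]
variable {F : Profile V A → Finset A}

/-- A single swap step at some voter, with constraint `C` on the swapped pair. -/
def PStep (C : V → A → A → Prop) (P Q : Profile V A) : Prop :=
  ∃ i L' s t, SwapPair (P i) L' s t ∧ C i s t ∧ Q = Function.update P i L'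

theorem chain_invariant (hcomm : ∀ P, (F P).card = 2) (hSPO : SPO F) (hSPP : SPP F)
    {C : V → A → A → Prop} (Inv : Profile V A → Prop)
    (hstep : ∀ (P : Profile V A) (i : V) (L' : Ballot A) (s t : A),
      SwapPair (P i) L' s t → C i s t → Inv P →
      (F (Function.update P i L') = F P ∨
        (t ∈ F P ∧ s ∉ F P ∧ F (Function.update P i L') = insert s ((F P).erase t))) →
      Inv (Function.update P i L'))
    {P0 R : Profile V A} (hch : Relation.ReflTransGen (PStep C) P0 R) (h0 : Inv P0) : Inv R := by
  induction hch with
  | refl => exact h0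
  | tail h1 h2 ih =>
      obtain ⟨i, L', s, t, hsw, hC, rfl⟩ := h2
      exact hstep _ i L' s t hsw hC ih (core hcomm hSPO hSPP _ i L' hsw)

theorem justAbove_right {L : Ballot A} {s t : A} (h : JustAbove L s t) {y : A}
    (hys : y ≠ s) (hyt : y ≠ t) : L.lt t y ↔ L.lt s y :=
  ⟨fun h2 => blt_trans L h.1 h2,
   fun h2 => by
     rcases blt_trichotomy L y t with h3 | h3 | h3
     · exact absurd ⟨h2, h3⟩ (h.2 y)
     · exact absurd h3 hyt
     · exact h3⟩

theorem justAbove_left {L : Ballot A} {s t : A} (h : JustAbove L s t) {y : A}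
    (hys : y ≠ s) (hyt : y ≠ t) : L.lt y s ↔ L.lt y t :=
  ⟨fun h2 => blt_trans L h2 h.1,
   fun h2 => by
     rcases blt_trichotomy L y s with h3 | h3 | h3
     · exact h3
     · exact absurd h3 hys
     · exact absurd ⟨h3, h2⟩ (h.2 y)⟩

theorem swapPair_swapBallot {L : Ballot A} {s t : A} (h : JustAbove L s t) :
    SwapPair L (swapBallot L s t) s t := by
  have hne : s ≠ t := blt_ne L h.1
  have hlt : ∀ x y, (swapBallot L s t).lt x y ↔ L.lt (Equiv.swap s t x) (Equiv.swap s t y) :=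
    fun x y => Iff.rfl
  refine ⟨h.1, ?_, ?_⟩
  · rw [hlt, Equiv.swap_apply_right, Equiv.swap_apply_left]; exact h.1
  · intro x y h1 h2
    rw [hlt]
    by_cases hxs : x = s
    · have hyt : y ≠ t := fun hc => h1 ⟨hxs, hc⟩
      by_cases hys : y = s
      · rw [hxs, hys, Equiv.swap_apply_left]
        exact iff_of_false (fun hc => blt_irrefl L hc) (fun hc => blt_irrefl L hc)
      · rw [hxs, Equiv.swap_apply_left, Equiv.swap_apply_of_ne_of_ne hys hyt]
        exact justAbove_right h hys hyt
    by_cases hxt : x = t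
    · have hys : y ≠ s := fun hc => h2 ⟨hxt, hc⟩
      by_cases hyt : y = t
      · rw [hxt, hyt, Equiv.swap_apply_right]
        exact iff_of_false (fun hc => blt_irrefl L hc) (fun hc => blt_irrefl L hc)
      · rw [hxt, Equiv.swap_apply_right, Equiv.swap_apply_of_ne_of_ne hys hyt]
        exact (justAbove_right h hys hyt).symm
    · rw [Equiv.swap_apply_of_ne_of_ne hxs hxt]
      by_cases hys : y = s
      · rw [hys, Equiv.swap_apply_left]
        exact (justAbove_left h hxs hxt).symm
      by_cases hyt : y = t
      · rw [hyt, Equiv.swap_apply_right]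
        exact justAbove_left h hxs hxt
      · rw [Equiv.swap_apply_of_ne_of_ne hys hyt]

theorem ble_iff (L : Ballot A) {x y : A} : L.le x y ↔ (L.lt x y ∨ x = y) := by
  letI := L; exact le_iff_lt_or_eq

theorem eq_of_no_inversion {L M : Ballot A} (h : ∀ x y, ¬(L.lt x y ∧ M.lt y x)) : L = M := by
  have hlt : ∀ x y, L.lt x y ↔ M.lt x y := by
    intro x y
    constructor
    · intro h1
      rcases blt_trichotomy M x y with h2 | h2 | h2
      · exact h2
      · exact absurd h2 (blt_ne L h1)
      · exact absurd ⟨h1, h2⟩ (h x y)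
    · intro h1
      rcases blt_trichotomy L x y with h2 | h2 | h2
      · exact h2
      · exact absurd h2 (blt_ne M h1)
      · exact absurd ⟨h2, h1⟩ (h y x)
  apply LinearOrder.ext
  intro x y
  show L.le x y ↔ M.le x y
  rw [ble_iff L, ble_iff M, hlt x y]

open Classical in
theorem exists_adjacent_inverted [Fintype A] {L M : Ballot A} (h : L ≠ M) :
    ∃ s t, JustAbove L s t ∧ M.lt t s := by
  classical
  have hIne : (Finset.univ.filter (fun p : A × A => L.lt p.1 p.2 ∧ M.lt p.2 p.1)).Nonempty := by
    by_contra hI2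
    rw [Finset.not_nonempty_iff_eq_empty] at hI2
    refine h (eq_of_no_inversion ?_)
    intro x y hxy
    have hmem : (x, y) ∈ Finset.univ.filter (fun p : A × A => L.lt p.1 p.2 ∧ M.lt p.2 p.1) := by
      simp only [Finset.mem_filter]; exact ⟨Finset.mem_univ _, hxy⟩
    rw [hI2] at hmem
    exact absurd hmem (Finset.notMem_empty _)
  obtain ⟨p, hp, hmin⟩ := Finset.exists_min_image _
      (fun p : A × A => (Finset.univ.filter (fun z => L.lt p.1 z ∧ L.lt z p.2)).card) hIne
  obtain ⟨s, t⟩ := p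
  rw [Finset.mem_filter] at hp
  refine ⟨s, t, ⟨hp.2.1, ?_⟩, hp.2.2⟩
  rintro z ⟨h1, h2⟩
  by_cases hzs : M.lt z s
  · have hmem : (s, z) ∈ Finset.univ.filter (fun p : A × A => L.lt p.1 p.2 ∧ M.lt p.2 p.1) := by
      simp only [Finset.mem_filter]; exact ⟨Finset.mem_univ _, h1, hzs⟩
    have hcard := hmin (s, z) hmem
    simp only at hcard
    have hsub : (Finset.univ.filter (fun w => L.lt s w ∧ L.lt w z))
        ⊆ (Finset.univ.filter (fun w => L.lt s w ∧ L.lt w t)) := by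
      intro w hw
      simp only [Finset.mem_filter] at hw ⊢
      exact ⟨hw.1, hw.2.1, blt_trans L hw.2.2 h2⟩
    have hss : (Finset.univ.filter (fun w => L.lt s w ∧ L.lt w z))
        ⊂ (Finset.univ.filter (fun w => L.lt s w ∧ L.lt w t)) := by
      rw [Finset.ssubset_iff_of_subset hsub]
      refine ⟨z, ?_, ?_⟩
      · simp only [Finset.mem_filter]; exact ⟨Finset.mem_univ _, h1, h2⟩
      · simp only [Finset.mem_filter]
        rintro ⟨-, -, hzz⟩
        exact blt_irrefl L hzz
    have := Finset.card_lt_card hss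
    omega
  by_cases hzt : M.lt t z
  · have hmem : (z, t) ∈ Finset.univ.filter (fun p : A × A => L.lt p.1 p.2 ∧ M.lt p.2 p.1) := by
      simp only [Finset.mem_filter]; exact ⟨Finset.mem_univ _, h2, hzt⟩
    have hcard := hmin (z, t) hmem
    simp only at hcard
    have hsub : (Finset.univ.filter (fun w => L.lt z w ∧ L.lt w t))
        ⊆ (Finset.univ.filter (fun w => L.lt s w ∧ L.lt w t)) := by
      intro w hw
      simp only [Finset.mem_filter] at hw ⊢
      exact ⟨hw.1, blt_trans L h1 hw.2.1, hw.2.2⟩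
    have hss : (Finset.univ.filter (fun w => L.lt z w ∧ L.lt w t))
        ⊂ (Finset.univ.filter (fun w => L.lt s w ∧ L.lt w t)) := by
      rw [Finset.ssubset_iff_of_subset hsub]
      refine ⟨z, ?_, ?_⟩
      · simp only [Finset.mem_filter]; exact ⟨Finset.mem_univ _, h1, h2⟩
      · simp only [Finset.mem_filter]
        rintro ⟨-, hzz, -⟩
        exact blt_irrefl L hzz
    have := Finset.card_lt_card hss
    omega
  · have h3 : M.lt s z := by
      rcases blt_trichotomy M z s with h4 | h4 | h4
      · exact absurd h4 hzs
      · exact absurd h4.symm (blt_ne L h1)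
      · exact h4
    have h4 : M.lt z t := by
      rcases blt_trichotomy M t z with h5 | h5 | h5
      · exact absurd h5 hzt
      · exact absurd h5.symm (blt_ne L h2)
      · exact h5
    exact blt_asymm M (blt_trans M h3 h4) hp.2.2

noncomputable def invSet {A : Type*} [Fintype A] (L M : Ballot A) : Finset (A × A) :=
  @Finset.filter (A × A) (fun p => L.lt p.1 p.2 ∧ M.lt p.2 p.1)
    (fun _ => Classical.propDecidable _) Finset.univ

open Classical in
theorem mem_invSet [Fintype A] {L M : Ballot A} {p : A × A} :
    p ∈ invSet L M ↔ (L.lt p.1 p.2 ∧ M.lt p.2 p.1) := by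
  constructor
  · intro h
    exact ((@Finset.mem_filter _ _ (fun _ => Classical.propDecidable _) _ _).mp h).2
  · intro h
    exact (@Finset.mem_filter _ _ (fun _ => Classical.propDecidable _) _ _).mpr
      ⟨Finset.mem_univ _, h⟩

theorem sort_chain_aux [Fintype A] (M : Ballot A) (n : ℕ) :
    ∀ L : Ballot A, (invSet L M).card ≤ n →
      Relation.ReflTransGen (fun L1 L2 => ∃ s t, SwapPair L1 L2 s t ∧ M.lt t s) L M := by
  induction n with
  | zero =>
      intro L hcard
      have hL : L = M := by
        apply eq_of_no_inversion
        intro x y hxy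
        have hmem : (x, y) ∈ invSet L M := mem_invSet.mpr hxy
        have := Finset.card_pos.mpr ⟨_, hmem⟩
        omega
      rw [hL]
  | succ n ih =>
      intro L hcard
      by_cases hLM : L = M
      · rw [hLM]
      obtain ⟨s, t, hJA, hMts⟩ := exists_adjacent_inverted hLM
      have hsw := swapPair_swapBallot hJA
      refine Relation.ReflTransGen.head ⟨s, t, hsw, hMts⟩ (ih (swapBallot L s t) ?_)
      have hmemst : (s, t) ∈ invSet L M := mem_invSet.mpr ⟨hJA.1, hMts⟩
      have hsub : invSet (swapBallot L s t) M ⊆ (invSet L M).erase (s, t) := by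
        rintro ⟨x, y⟩ hp
        rw [mem_invSet] at hp
        rw [Finset.mem_erase, mem_invSet]
        obtain ⟨h1, h2⟩ := hp
        by_cases hst : x = s ∧ y = t
        · exfalso; obtain ⟨rfl, rfl⟩ := hst
          exact blt_asymm _ h1 hsw.2.1
        by_cases hts : x = t ∧ y = s
        · exfalso; obtain ⟨rfl, rfl⟩ := hts
          exact blt_asymm M h2 hMts
        · refine ⟨?_, (hsw.2.2 x y hst hts).mp h1, h2⟩
          intro hc
          rw [Prod.mk.injEq] at hc
          exact hst hc
      refine le_trans (Finset.card_le_card hsub) ?_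
      rw [Finset.card_erase_of_mem hmemst]
      have hpos := Finset.card_pos.mpr ⟨_, hmemst⟩
      omega

theorem sort_chain [Fintype A] (M L : Ballot A) :
    Relation.ReflTransGen (fun L1 L2 => ∃ s t, SwapPair L1 L2 s t ∧ M.lt t s) L M :=
  sort_chain_aux M _ L le_rfl

theorem chain_lift {C : V → A → A → Prop} (i : V) {L M : Ballot A}
    (h : Relation.ReflTransGen (fun L1 L2 => ∃ s t, SwapPair L1 L2 s t ∧ C i s t) L M) :
    ∀ P : Profile V A, P i = L →
      Relation.ReflTransGen (PStep C) P (Function.update P i M) := by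
  induction h using Relation.ReflTransGen.head_induction_on with
  | refl =>
      intro P hP
      rw [← hP, Function.update_eq_self]
  | @head L1 L2 hstep hchain ih =>
      intro P hP
      obtain ⟨s, t, hsw, hC⟩ := hstep
      refine Relation.ReflTransGen.head ⟨i, L2, s, t, by rw [hP]; exact hsw, hC, rfl⟩ ?_
      have h2 := ih (Function.update P i L2) (Function.update_self i L2 P)
      rwa [Function.update_idem] at h2

theorem reach_aux [Fintype A] (R : Profile V A) :
    ∀ (l : List V) (P : Profile V A), (∀ i, i ∉ l → P i = R i) →
      Relation.ReflTransGen (PStep (V := V) (A := A) (fun i s t => (R i).lt t s)) P R := by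
  intro l
  induction l with
  | nil =>
      intro P h
      have hPR : P = R := funext fun i => h i (List.not_mem_nil (a := i))
      rw [hPR]
  | cons j l ih =>
      intro P h
      have hb := sort_chain (R j) (P j)
      have h1 := chain_lift (C := fun i s t => (R i).lt t s) j hb P rfl
      refine h1.trans (ih (Function.update P j (R j)) ?_)
      intro i hi
      by_cases hij : i = j
      · rw [hij, Function.update_self]
      · rw [Function.update_of_ne hij]
        refine h i ?_
        intro hc
        rcases List.mem_cons.mp hc with hc1 | hc1
        · exact hij hc1
        · exact hi hc1

theorem reach_all [Fintype V] [Fintype A] (R P : Profile V A) :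
    Relation.ReflTransGen (PStep (V := V) (A := A) (fun i s t => (R i).lt t s)) P R :=
  reach_aux R Finset.univ.toList P
    (fun i hi => absurd (Finset.mem_toList.mpr (Finset.mem_univ i)) hi)

/-- `M` lies between `L` and `N`: every pair on which `L` and `N` agree, `M` agrees too. -/
def Agrees (L M N : Ballot A) : Prop :=
  ∀ x y : A, (L.lt x y ↔ N.lt x y) → (M.lt x y ↔ N.lt x y)

theorem agrees_refl (L N : Ballot A) : Agrees L L N := fun _ _ h => h

theorem agrees_step {L M M' N : Ballot A} {s t : A} (h : Agrees L M N)
    (hsw : SwapPair M M' s t) (hN : N.lt t s) : Agrees L M' N := by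
  intro x y hxy
  by_cases h1 : x = t ∧ y = s
  · obtain ⟨rfl, rfl⟩ := h1
    exact iff_of_true hsw.2.1 hN
  by_cases h2 : x = s ∧ y = t
  · obtain ⟨rfl, rfl⟩ := h2
    exact iff_of_false (fun hc => blt_asymm M' hc hsw.2.1) (fun hc => blt_asymm N hc hN)
  · rw [hsw.2.2 x y h2 h1]; exact h x y hxy

end Chains

section ListBallots

variable {A : Type*} [Fintype A] [DecidableEq A]

noncomputable def ballotOfList (l : List A) : Ballot A :=
  LinearOrder.lift'
    (fun x => toLex (((if x ∈ l then l.length - l.idxOf x else 0) : ℕ),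
      ((Fintype.equivFin A) x : ℕ)))
    (by
      intro x y h
      have h2 := toLex.injective h
      have h3 := (Prod.ext_iff.mp h2).2
      exact (Fintype.equivFin A).injective (Fin.val_injective h3))

theorem ballotOfList_lt_iff (l : List A) (x y : A) :
    (ballotOfList l).lt x y ↔
      ((if x ∈ l then l.length - l.idxOf x else 0)
          < (if y ∈ l then l.length - l.idxOf y else 0)
        ∨ ((if x ∈ l then l.length - l.idxOf x else 0)
            = (if y ∈ l then l.length - l.idxOf y else 0)
           ∧ ((Fintype.equivFin A) x : ℕ) < ((Fintype.equivFin A) y : ℕ))) :=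
  Prod.Lex.lt_iff

theorem ballotOfList_lt_mem (l : List A) (hnd : l.Nodup) {x y : A}
    (hx : x ∈ l) (hy : y ∈ l) :
    ((ballotOfList l).lt x y ↔ l.idxOf y < l.idxOf x) := by
  rw [ballotOfList_lt_iff, if_pos hx, if_pos hy]
  have h1 : l.idxOf x < l.length := List.idxOf_lt_length_iff.mpr hx
  have h2 : l.idxOf y < l.length := List.idxOf_lt_length_iff.mpr hy
  constructor
  · rintro (h | ⟨h, h3⟩)
    · omega
    · have h4 : l.idxOf x = l.idxOf y := by omega
      have hxy : x = y := (List.idxOf_inj hx).mp h4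
      rw [hxy] at h3
      exact absurd h3 (lt_irrefl _)
  · intro h
    left; omega

theorem ballotOfList_lt_of_not_mem (l : List A) {x y : A} (hx : x ∉ l) (hy : y ∈ l) :
    (ballotOfList l).lt x y := by
  rw [ballotOfList_lt_iff, if_neg hx, if_pos hy]
  left
  have := List.idxOf_lt_length_iff.mpr hy
  omega

theorem ballotOfList_mem_of_lt (l : List A) {x y : A} (hx : x ∈ l)
    (h : (ballotOfList l).lt x y) : y ∈ l := by
  by_contra hy
  exact blt_asymm _ h (ballotOfList_lt_of_not_mem l hy hx)

theorem ballotOfList_lt_dest (l : List A) (hnd : l.Nodup) {x y : A} (hx : x ∈ l)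
    (h : (ballotOfList l).lt x y) : y ∈ l ∧ l.idxOf y < l.idxOf x := by
  have hy := ballotOfList_mem_of_lt l hx h
  exact ⟨hy, (ballotOfList_lt_mem l hnd hx hy).mp h⟩

end ListBallots

theorem pair_erase {A : Type*} [DecidableEq A] {u v : A} (h : u ≠ v) :
    ({u, v} : Finset A).erase v = {u} := by
  rw [Finset.pair_comm, Finset.erase_insert (Finset.notMem_singleton.mpr (Ne.symm h))]

section MainLemmas

variable {V A : Type*} [DecidableEq V] [Nonempty A] [DecidableEq A] [Fintype A] [Fintype V]
variable {F : Profile V A → Finset A}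

theorem tops_lemma (hcomm : ∀ P, (F P).card = 2) (hSPO : SPO F) (hSPP : SPP F)
    {a b : A} (hedge : ∃ P, F P = {a, b})
    (R : Profile V A) (hR : ∀ (i : V) (x : A), x ≠ a → x ≠ b → (R i).lt x a ∧ (R i).lt x b) :
    F R = {a, b} := by
  obtain ⟨P0, hP0⟩ := hedge
  refine chain_invariant hcomm hSPO hSPP (fun P => F P = {a, b}) ?_ (reach_all R P0) hP0
  intro P i L' s t hsw hC hInv hdisj
  rcases hdisj with heq | ⟨htS, hsS, hT⟩
  · rw [heq, hInv]
  · exfalso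
    rw [hInv] at htS hsS
    have hsa : s ≠ a := fun hc => hsS (by rw [hc]; simp)
    have hsb : s ≠ b := fun hc => hsS (by rw [hc]; simp)
    have hR2 := hR i s hsa hsb
    rcases Finset.mem_insert.mp htS with rfl | htS2
    · exact blt_asymm (R i) hC hR2.1
    · rw [Finset.mem_singleton.mp htS2] at hC
      exact blt_asymm (R i) hC hR2.2

theorem half_ec (hcomm : ∀ P, (F P).card = 2) (hSPO : SPO F) (hSPP : SPP F)
    {a b c d : A} (hab : a ≠ b) (hac : a ≠ c) (had : a ≠ d) (hbc : b ≠ c) (hbd : b ≠ d)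
    (hcd : c ≠ d) (hE1 : ∃ P, F P = {a, b}) (hE2 : ∃ P, F P = {c, d}) :
    (∃ P, F P = {b, c}) ∨ (∃ P, F P = {b, d}) := by
  classical
  -- the three ballots
  set β : Ballot A := ballotOfList [b, a, c, d] with hβ
  set γ : Ballot A := ballotOfList [b, c, d, a] with hγ
  set δ : Ballot A := ballotOfList [c, d, b, a] with hδ
  have hndβ : ([b, a, c, d] : List A).Nodup := by
    simp [hab, hbc, hbd, hac, had, hcd, Ne.symm hab, Ne.symm hbc, Ne.symm hbd,
      Ne.symm hac, Ne.symm had, Ne.symm hcd]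
  have hndγ : ([b, c, d, a] : List A).Nodup := by
    simp [hab, hbc, hbd, hac, had, hcd, Ne.symm hab, Ne.symm hbc, Ne.symm hbd,
      Ne.symm hac, Ne.symm had, Ne.symm hcd]
  have hndδ : ([c, d, b, a] : List A).Nodup := by
    simp [hab, hbc, hbd, hac, had, hcd, Ne.symm hab, Ne.symm hbc, Ne.symm hbd,
      Ne.symm hac, Ne.symm had, Ne.symm hcd]
  -- index facts
  have iβb : ([b, a, c, d] : List A).idxOf b = 0 := List.idxOf_cons_self
  have iβa : ([b, a, c, d] : List A).idxOf a = 1 := by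
    rw [List.idxOf_cons_ne _ (Ne.symm hab), List.idxOf_cons_self]
  have iβc : ([b, a, c, d] : List A).idxOf c = 2 := by
    rw [List.idxOf_cons_ne _ hbc, List.idxOf_cons_ne _ hac, List.idxOf_cons_self]
  have iβd : ([b, a, c, d] : List A).idxOf d = 3 := by
    rw [List.idxOf_cons_ne _ hbd, List.idxOf_cons_ne _ had,
      List.idxOf_cons_ne _ hcd, List.idxOf_cons_self]
  have iγb : ([b, c, d, a] : List A).idxOf b = 0 := List.idxOf_cons_self
  have iγc : ([b, c, d, a] : List A).idxOf c = 1 := by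
    rw [List.idxOf_cons_ne _ hbc, List.idxOf_cons_self]
  have iγd : ([b, c, d, a] : List A).idxOf d = 2 := by
    rw [List.idxOf_cons_ne _ hbd, List.idxOf_cons_ne _ hcd, List.idxOf_cons_self]
  have iγa : ([b, c, d, a] : List A).idxOf a = 3 := by
    rw [List.idxOf_cons_ne _ (Ne.symm hab), List.idxOf_cons_ne _ (Ne.symm hac),
      List.idxOf_cons_ne _ (Ne.symm had), List.idxOf_cons_self]
  have iδc : ([c, d, b, a] : List A).idxOf c = 0 := List.idxOf_cons_self
  have iδd : ([c, d, b, a] : List A).idxOf d = 1 := by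
    rw [List.idxOf_cons_ne _ hcd, List.idxOf_cons_self]
  have iδb : ([c, d, b, a] : List A).idxOf b = 2 := by
    rw [List.idxOf_cons_ne _ (Ne.symm hbc), List.idxOf_cons_ne _ (Ne.symm hbd),
      List.idxOf_cons_self]
  have iδa : ([c, d, b, a] : List A).idxOf a = 3 := by
    rw [List.idxOf_cons_ne _ (Ne.symm hac), List.idxOf_cons_ne _ (Ne.symm had),
      List.idxOf_cons_ne _ (Ne.symm hab), List.idxOf_cons_self]
  -- elementary comparison facts
  have hβca : β.lt c a :=
    (ballotOfList_lt_mem _ hndβ (by simp) (by simp)).mpr (by rw [iβa, iβc]; omega)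
  have hβcb : β.lt c b :=
    (ballotOfList_lt_mem _ hndβ (by simp) (by simp)).mpr (by rw [iβb, iβc]; omega)
  have hβda : β.lt d a :=
    (ballotOfList_lt_mem _ hndβ (by simp) (by simp)).mpr (by rw [iβa, iβd]; omega)
  have hβdb : β.lt d b :=
    (ballotOfList_lt_mem _ hndβ (by simp) (by simp)).mpr (by rw [iβb, iβd]; omega)
  have hγab : γ.lt a b :=
    (ballotOfList_lt_mem _ hndγ (by simp) (by simp)).mpr (by rw [iγa, iγb]; omega)
  have hγac : γ.lt a c :=
    (ballotOfList_lt_mem _ hndγ (by simp) (by simp)).mpr (by rw [iγa, iγc]; omega)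
  have hγad : γ.lt a d :=
    (ballotOfList_lt_mem _ hndγ (by simp) (by simp)).mpr (by rw [iγa, iγd]; omega)
  have hδab : δ.lt a b :=
    (ballotOfList_lt_mem _ hndδ (by simp) (by simp)).mpr (by rw [iδa, iδb]; omega)
  have hδac : δ.lt a c :=
    (ballotOfList_lt_mem _ hndδ (by simp) (by simp)).mpr (by rw [iδa, iδc]; omega)
  have hδad : δ.lt a d :=
    (ballotOfList_lt_mem _ hndδ (by simp) (by simp)).mpr (by rw [iδa, iδd]; omega)
  have hδbc : δ.lt b c :=
    (ballotOfList_lt_mem _ hndδ (by simp) (by simp)).mpr (by rw [iδb, iδc]; omega)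
  have hδbd : δ.lt b d :=
    (ballotOfList_lt_mem _ hndδ (by simp) (by simp)).mpr (by rw [iδb, iδd]; omega)
  -- F at the all-β profile
  have hFβ : F (fun _ : V => β) = {a, b} := by
    refine tops_lemma hcomm hSPO hSPP hE1 _ ?_
    intro i x hxa hxb
    by_cases hxl : x ∈ ([b, a, c, d] : List A)
    · have hx : x = c ∨ x = d := by
        rcases List.mem_cons.mp hxl with h | h
        · exact absurd h hxb
        rcases List.mem_cons.mp h with h1 | h1
        · exact absurd h1 hxa
        rcases List.mem_cons.mp h1 with h2 | h2
        · exact Or.inl h2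
        rcases List.mem_cons.mp h2 with h3 | h3
        · exact Or.inr h3
        · exact absurd h3 (List.not_mem_nil (a := x))
      rcases hx with h | h <;> rw [h]
      · exact ⟨hβca, hβcb⟩
      · exact ⟨hβda, hβdb⟩
    · exact ⟨ballotOfList_lt_of_not_mem _ hxl (by simp),
        ballotOfList_lt_of_not_mem _ hxl (by simp)⟩
  -- F at the all-δ profile
  have hFδ : F (fun _ : V => δ) = {c, d} := by
    refine tops_lemma hcomm hSPO hSPP hE2 _ ?_
    intro i x hxc hxd
    by_cases hxl : x ∈ ([c, d, b, a] : List A)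
    · have hx : x = b ∨ x = a := by
        rcases List.mem_cons.mp hxl with h | h
        · exact absurd h hxc
        rcases List.mem_cons.mp h with h1 | h1
        · exact absurd h1 hxd
        rcases List.mem_cons.mp h1 with h2 | h2
        · exact Or.inl h2
        rcases List.mem_cons.mp h2 with h3 | h3
        · exact Or.inr h3
        · exact absurd h3 (List.not_mem_nil (a := x))
      rcases hx with h | h <;> rw [h]
      · exact ⟨hδbc, hδbd⟩
      · exact ⟨hδac, hδad⟩
    · exact ⟨ballotOfList_lt_of_not_mem _ hxl (by simp),
        ballotOfList_lt_of_not_mem _ hxl (by simp)⟩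
  -- phase 1 : from all-β to all-γ
  have hph1 : F (fun _ : V => γ) = {a, b} ∨ F (fun _ : V => γ) = {b, c}
      ∨ F (fun _ : V => γ) = {b, d} := by
    refine chain_invariant hcomm hSPO hSPP
      (fun P => F P = {a, b} ∨ F P = {b, c} ∨ F P = {b, d}) ?_
      (reach_all (fun _ => γ) (fun _ => β)) (Or.inl hFβ)
    intro P i L' s t hsw hC hInv hdisj
    rcases hdisj with heq | ⟨htS, hsS, hT⟩
    · rw [heq]; exact hInv
    -- a replacement happened, with γ.lt t s
    have hbtop : ∀ z : A, ¬ γ.lt b z := by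
      intro z hz
      obtain ⟨hzl, hzidx⟩ := ballotOfList_lt_dest _ hndγ (by simp) hz
      rw [iγb] at hzidx
      omega
    rcases hInv with h2 | h2 | h2
    · -- current committee {a, b}
      rw [h2] at htS hsS
      rcases Finset.mem_insert.mp htS with hteq | htS2
      · -- t = a replaced by s, γ.lt a s
        rw [hteq] at hC hT
        obtain ⟨hsl, hsidx⟩ := ballotOfList_lt_dest _ hndγ (by simp) hC
        rw [iγa] at hsidx
        have hs : s = c ∨ s = d := by
          rcases List.mem_cons.mp hsl with h3 | h3
          · exact absurd (by rw [h3]; simp : s ∈ ({a, b} : Finset A)) hsS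
          rcases List.mem_cons.mp h3 with h4 | h4
          · exact Or.inl h4
          rcases List.mem_cons.mp h4 with h5 | h5
          · exact Or.inr h5
          rcases List.mem_cons.mp h5 with h6 | h6
          · rw [h6, iγa] at hsidx; omega
          · exact absurd h6 (List.not_mem_nil (a := s))
        rw [hT, h2]
        rw [show ({a, b} : Finset A).erase a = {b} from
          Finset.erase_insert (Finset.notMem_singleton.mpr hab)]
        rcases hs with hs1 | hs1 <;> rw [hs1]
        · exact Or.inr (Or.inl (Finset.pair_comm c b))
        · exact Or.inr (Or.inr (Finset.pair_comm d b))
      · rw [Finset.mem_singleton.mp htS2] at hC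
        exact absurd hC (hbtop s)
    · -- current committee {b, c}
      rw [h2] at htS hsS
      rcases Finset.mem_insert.mp htS with hteq | htS2
      · rw [hteq] at hC; exact absurd hC (hbtop s)
      · rw [Finset.mem_singleton.mp htS2] at hC
        obtain ⟨hsl, hsidx⟩ := ballotOfList_lt_dest _ hndγ (by simp) hC
        rw [iγc] at hsidx
        have hs : s = b := by
          rcases List.mem_cons.mp hsl with h3 | h3
          · exact h3
          rcases List.mem_cons.mp h3 with h4 | h4
          · rw [h4, iγc] at hsidx; omega
          rcases List.mem_cons.mp h4 with h5 | h5
          · rw [h5, iγd] at hsidx; omega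
          rcases List.mem_cons.mp h5 with h6 | h6
          · rw [h6, iγa] at hsidx; omega
          · exact absurd h6 (List.not_mem_nil (a := s))
        exact absurd (by rw [hs]; simp : s ∈ ({b, c} : Finset A)) hsS
    · -- current committee {b, d}
      rw [h2] at htS hsS
      rcases Finset.mem_insert.mp htS with hteq | htS2
      · rw [hteq] at hC; exact absurd hC (hbtop s)
      · have htd : t = d := Finset.mem_singleton.mp htS2
        rw [htd] at hC hT
        obtain ⟨hsl, hsidx⟩ := ballotOfList_lt_dest _ hndγ (by simp) hC
        rw [iγd] at hsidx
        have hs : s = b ∨ s = c := by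
          rcases List.mem_cons.mp hsl with h3 | h3
          · exact Or.inl h3
          rcases List.mem_cons.mp h3 with h4 | h4
          · exact Or.inr h4
          rcases List.mem_cons.mp h4 with h5 | h5
          · rw [h5, iγd] at hsidx; omega
          rcases List.mem_cons.mp h5 with h6 | h6
          · rw [h6, iγa] at hsidx; omega
          · exact absurd h6 (List.not_mem_nil (a := s))
        rcases hs with hs1 | hs1
        · exact absurd (by rw [hs1]; simp : s ∈ ({b, d} : Finset A)) hsS
        · rw [hT, h2, pair_erase hbd, hs1]
          exact Or.inr (Or.inl (Finset.pair_comm c b))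
  -- dispatch on the phase-1 outcome
  rcases hph1 with hph | hph | hph
  · -- excluded via phase 2 : from all-γ to all-δ
    exfalso
    have hph2 : (∀ i : V, Agrees γ ((fun _ : V => δ) i) δ) ∧
        (F (fun _ : V => δ) = {a, b} ∨ F (fun _ : V => δ) = {a, c}
          ∨ F (fun _ : V => δ) = {a, d}) := by
      refine chain_invariant hcomm hSPO hSPP
        (fun P => (∀ i : V, Agrees γ (P i) δ) ∧
          (F P = {a, b} ∨ F P = {a, c} ∨ F P = {a, d})) ?_
        (reach_all (fun _ => δ) (fun _ => γ)) ⟨fun _ => agrees_refl γ δ, Or.inl hph⟩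
      intro P i L' s t hsw hC hInv hdisj
      constructor
      · intro j
        by_cases hji : j = i
        · rw [hji, Function.update_self]
          exact agrees_step (hInv.1 i) hsw hC
        · rw [Function.update_of_ne hji]
          exact hInv.1 j
      rcases hdisj with heq | ⟨htS, hsS, hT⟩
      · rw [heq]; exact hInv.2
      -- exclusion : t = a is never passed
      have hta : t ≠ a := by
        intro hteq
        rw [hteq] at hC
        obtain ⟨hsl, hsidx⟩ := ballotOfList_lt_dest _ hndδ (by simp) hC
        rw [iδa] at hsidx
        have hγas : γ.lt a s ∧ δ.lt a s := by
          rcases List.mem_cons.mp hsl with h3 | h3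
          · rw [h3]; exact ⟨hγac, hδac⟩
          rcases List.mem_cons.mp h3 with h4 | h4
          · rw [h4]; exact ⟨hγad, hδad⟩
          rcases List.mem_cons.mp h4 with h5 | h5
          · rw [h5]; exact ⟨hγab, hδab⟩
          rcases List.mem_cons.mp h5 with h6 | h6
          · rw [h6, iδa] at hsidx; omega
          · exact absurd h6 (List.not_mem_nil (a := s))
        have hPi := (hInv.1 i a s (iff_of_true hγas.1 hγas.2)).mpr hγas.2
        rw [hteq] at hsw
        exact blt_asymm (P i) hsw.1 hPi
      have hctop : ∀ z : A, ¬ δ.lt c z := by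
        intro z hz
        obtain ⟨hzl, hzidx⟩ := ballotOfList_lt_dest _ hndδ (by simp) hz
        rw [iδc] at hzidx
        omega
      rcases hInv.2 with h2 | h2 | h2
      · -- committee {a, b} : only b can be replaced, by c or d
        rw [h2] at htS hsS
        rcases Finset.mem_insert.mp htS with hteq | htS2
        · exact absurd hteq hta
        · have htb : t = b := Finset.mem_singleton.mp htS2
          rw [htb] at hC hT
          obtain ⟨hsl, hsidx⟩ := ballotOfList_lt_dest _ hndδ (by simp) hC
          rw [iδb] at hsidx
          have hs : s = c ∨ s = d := by
            rcases List.mem_cons.mp hsl with h3 | h3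
            · exact Or.inl h3
            rcases List.mem_cons.mp h3 with h4 | h4
            · exact Or.inr h4
            rcases List.mem_cons.mp h4 with h5 | h5
            · rw [h5, iδb] at hsidx; omega
            rcases List.mem_cons.mp h5 with h6 | h6
            · rw [h6, iδa] at hsidx; omega
            · exact absurd h6 (List.not_mem_nil (a := s))
          rw [hT, h2, pair_erase hab]
          rcases hs with hs1 | hs1 <;> rw [hs1]
          · exact Or.inr (Or.inl (Finset.pair_comm c a))
          · exact Or.inr (Or.inr (Finset.pair_comm d a))
      · -- committee {a, c}
        rw [h2] at htS hsS
        rcases Finset.mem_insert.mp htS with hteq | htS2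
        · exact absurd hteq hta
        · rw [Finset.mem_singleton.mp htS2] at hC
          exact absurd hC (hctop s)
      · -- committee {a, d}
        rw [h2] at htS hsS
        rcases Finset.mem_insert.mp htS with hteq | htS2
        · exact absurd hteq hta
        · have htd : t = d := Finset.mem_singleton.mp htS2
          rw [htd] at hC hT
          obtain ⟨hsl, hsidx⟩ := ballotOfList_lt_dest _ hndδ (by simp) hC
          rw [iδd] at hsidx
          have hs : s = c := by
            rcases List.mem_cons.mp hsl with h3 | h3
            · exact h3
            rcases List.mem_cons.mp h3 with h4 | h4
            · rw [h4, iδd] at hsidx; omega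
            rcases List.mem_cons.mp h4 with h5 | h5
            · rw [h5, iδb] at hsidx; omega
            rcases List.mem_cons.mp h5 with h6 | h6
            · rw [h6, iδa] at hsidx; omega
            · exact absurd h6 (List.not_mem_nil (a := s))
          rw [hT, h2, pair_erase had, hs]
          exact Or.inr (Or.inl (Finset.pair_comm c a))
    -- endpoint contradiction
    have hmem : a ∈ F (fun _ : V => δ) := by
      rcases hph2.2 with h3 | h3 | h3 <;> rw [h3] <;> simp
    rw [hFδ] at hmem
    rcases Finset.mem_insert.mp hmem with h4 | h4
    · exact hac h4
    · exact had (Finset.mem_singleton.mp h4)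
  · exact Or.inl ⟨_, hph⟩
  · exact Or.inr ⟨_, hph⟩

end MainLemmas

section Extend

variable {X : Type*} [Fintype X]

noncomputable def rankSet (q : LinearOrder X) (u : X) : Finset X :=
  @Finset.filter X (fun w => q.lt w u) (fun _ => Classical.propDecidable _) Finset.univ

theorem mem_rankSet {q : LinearOrder X} {u w : X} : w ∈ rankSet q u ↔ q.lt w u := by
  constructor
  · intro h
    exact ((@Finset.mem_filter _ _ (fun _ => Classical.propDecidable _) _ _).mp h).2
  · intro h
    exact (@Finset.mem_filter _ _ (fun _ => Classical.propDecidable _) _ _).mpr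
      ⟨Finset.mem_univ _, h⟩

noncomputable def rankIn (q : LinearOrder X) (u : X) : ℕ := (rankSet q u).card

theorem rankIn_lt_iff (q : LinearOrder X) {u v : X} :
    rankIn q u < rankIn q v ↔ q.lt u v := by
  constructor
  · intro h
    rcases blt_trichotomy q u v with h1 | h1 | h1
    · exact h1
    · rw [h1] at h; exact absurd h (lt_irrefl _)
    · exfalso
      have hsub : rankSet q v ⊆ rankSet q u := by
        intro w hw
        rw [mem_rankSet] at hw ⊢
        exact blt_trans q hw h1
      have := Finset.card_le_card hsub
      unfold rankIn at h
      omega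
  · intro h
    have hsub : rankSet q u ⊆ rankSet q v := by
      intro w hw
      rw [mem_rankSet] at hw ⊢
      exact blt_trans q hw h
    have hss : rankSet q u ⊂ rankSet q v := by
      rw [Finset.ssubset_iff_of_subset hsub]
      exact ⟨u, mem_rankSet.mpr h, fun hc => blt_irrefl q (mem_rankSet.mp hc)⟩
    exact Finset.card_lt_card hss

end Extend

section ExtendBallot

variable {A : Type*} [Fintype A] [DecidableEq A]

noncomputable def extendBallot (X : Finset A) (q : Ballot {x // x ∈ X}) : Ballot A :=
  LinearOrder.lift'
    (fun x => toLex (((if x ∈ X then 1 else 0) : ℕ),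
      (if h : x ∈ X then rankIn q ⟨x, h⟩ else ((Fintype.equivFin A) x : ℕ))))
    (by
      intro x y h
      have h2 := toLex.injective h
      have h1 := (Prod.ext_iff.mp h2).1
      have h3 := (Prod.ext_iff.mp h2).2
      by_cases hx : x ∈ X <;> by_cases hy : y ∈ X
      · rw [dif_pos hx, dif_pos hy] at h3
        have h4 : (⟨x, hx⟩ : {x // x ∈ X}) = ⟨y, hy⟩ := by
          rcases blt_trichotomy q ⟨x, hx⟩ ⟨y, hy⟩ with h4 | h4 | h4
          · exfalso; have := (rankIn_lt_iff q).mpr h4; omega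
          · exact h4
          · exfalso; have := (rankIn_lt_iff q).mpr h4; omega
        exact congrArg Subtype.val h4
      · rw [if_pos hx, if_neg hy] at h1; omega
      · rw [if_neg hx, if_pos hy] at h1; omega
      · rw [dif_neg hx, dif_neg hy] at h3
        exact (Fintype.equivFin A).injective (Fin.val_injective h3))

theorem extendBallot_lt_iff (X : Finset A) (q : Ballot {x // x ∈ X}) {x y : A}
    (hx : x ∈ X) (hy : y ∈ X) :
    ((extendBallot X q).lt x y ↔ q.lt ⟨x, hx⟩ ⟨y, hy⟩) := by
  constructor
  · intro h
    rcases Prod.Lex.lt_iff.mp h with h1 | ⟨h1, h2⟩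
    · dsimp only [ofLex_toLex] at h1; rw [if_pos hx, if_pos hy] at h1; omega
    · dsimp only [ofLex_toLex] at h2; rw [dif_pos hx, dif_pos hy] at h2
      exact (rankIn_lt_iff q).mp h2
  · intro h
    refine Prod.Lex.lt_iff.mpr (Or.inr ⟨?_, ?_⟩)
    · dsimp only [ofLex_toLex]; rw [if_pos hx, if_pos hy]
    · dsimp only [ofLex_toLex]; rw [dif_pos hx, dif_pos hy]
      exact (rankIn_lt_iff q).mpr h

theorem restrictBallot_lt_iff (L : Ballot A) (X : Finset A) {u v : {x // x ∈ X}} :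
    (restrictBallot L X).lt u v ↔ L.lt u.val v.val := Iff.rfl

end ExtendBallot

section WellDef

variable {V A : Type*} [DecidableEq V] [Nonempty A] [DecidableEq A] [Fintype A] [Fintype V]
variable {F : Profile V A → Finset A}

theorem cross_winner_eq (hcomm : ∀ P, (F P).card = 2) (hSPO : SPO F) (hSPP : SPP F)
    (X Y : Finset A) (hdisjXY : Disjoint X Y)
    (hcross : ∀ P : Profile V A, ∃ u v, F P = {u, v} ∧ u ∈ X ∧ v ∈ Y)
    (P P' : Profile V A)
    (hagree : ∀ (i : V) (x y : A), x ∈ X → y ∈ X → ((P i).lt x y ↔ (P' i).lt x y)) :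
    F P ∩ X = F P' ∩ X := by
  have hmain : (∀ i : V, Agrees (P i) (P' i) (P' i)) ∧ F P' ∩ X = F P ∩ X := by
    refine chain_invariant hcomm hSPO hSPP
      (fun Pc => (∀ i : V, Agrees (P i) (Pc i) (P' i)) ∧ F Pc ∩ X = F P ∩ X) ?_
      (reach_all P' P) ⟨fun i => agrees_refl _ _, rfl⟩
    intro Pc i L' s t hsw hC hInvc hdisj
    constructor
    · intro j
      by_cases hji : j = i
      · rw [hji, Function.update_self]
        exact agrees_step (hInvc.1 i) hsw hC
      · rw [Function.update_of_ne hji]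
        exact hInvc.1 j
    rcases hdisj with heq | ⟨htS, hsS, hT⟩
    · rw [heq]; exact hInvc.2
    -- the swapped pair is not contained in X
    have hnb : ¬(s ∈ X ∧ t ∈ X) := by
      rintro ⟨hsX, htX⟩
      have hPi := (hInvc.1 i s t (hagree i s t hsX htX)).mp hsw.1
      exact blt_asymm (P' i) hPi hC
    obtain ⟨u, v, hUV, huX, hvY⟩ := hcross Pc
    obtain ⟨u', v', hUV', hu'X, hv'Y⟩ := hcross (Function.update Pc i L')
    have ht_cases : t = u ∨ t = v := by
      rw [hUV] at htS
      rcases Finset.mem_insert.mp htS with h3 | h3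
      · exact Or.inl h3
      · exact Or.inr (Finset.mem_singleton.mp h3)
    rcases ht_cases with hteq | hteq
    · -- t = u ∈ X : impossible, the new committee would avoid X
      exfalso
      have hsX : s ∉ X := fun hsX2 => hnb ⟨hsX2, by rw [hteq]; exact huX⟩
      have hu'mem : u' ∈ insert s ((F Pc).erase t) := by
        rw [← hT, hUV']; simp
      rcases Finset.mem_insert.mp hu'mem with h3 | h3
      · rw [h3] at hu'X; exact hsX hu'X
      · have h4 := Finset.mem_of_mem_erase h3
        have h5 := Finset.ne_of_mem_erase h3
        rw [hUV] at h4
        rcases Finset.mem_insert.mp h4 with h6 | h6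
        · exact h5 (h6.trans hteq.symm)
        · rw [Finset.mem_singleton.mp h6] at hu'X
          exact (Finset.disjoint_left.mp hdisjXY hu'X) hvY
    · -- t = v ∈ Y
      by_cases hsX : s ∈ X
      · exfalso
        have hv'mem : v' ∈ insert s ((F Pc).erase t) := by
          rw [← hT, hUV']; simp
        rcases Finset.mem_insert.mp hv'mem with h3 | h3
        · rw [← h3] at hsX
          exact (Finset.disjoint_left.mp hdisjXY hsX) hv'Y
        · have h4 := Finset.mem_of_mem_erase h3
          have h5 := Finset.ne_of_mem_erase h3
          rw [hUV] at h4
          rcases Finset.mem_insert.mp h4 with h6 | h6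
          · rw [h6] at hv'Y
            exact (Finset.disjoint_left.mp hdisjXY huX) hv'Y
          · exact h5 ((Finset.mem_singleton.mp h6).trans hteq.symm)
      · -- s outside X : the X-winner is unchanged
        rw [hT, ← hInvc.2]
        ext z
        simp only [Finset.mem_inter, Finset.mem_insert, Finset.mem_erase]
        constructor
        · rintro ⟨h3 | ⟨h3, h4⟩, hzX⟩
          · rw [h3] at hzX; exact absurd hzX hsX
          · exact ⟨h4, hzX⟩
        · rintro ⟨hzF, hzX⟩
          refine ⟨Or.inr ⟨?_, hzF⟩, hzX⟩
          intro he
          rw [he, hteq] at hzX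
          exact (Finset.disjoint_left.mp hdisjXY hzX) hvY
  exact hmain.2.symm

end WellDef


/-- in the range graph of an irreducible, weakly viable consular election
rule satisfying SPP and SPO, every vertex lies on a 3-cycle and every edge lies on a
3-cycle. -/
theorem statement_17 {V A : Type*} [Fintype V] [Nonempty V] [DecidableEq V] [Fintype A] [DecidableEq A] [Nonempty A]
    (F : Profile V A → Finset A) (hcomm : ∀ P, (F P).card = 2)
    (hirred : ¬ Reducible F) (hviable : WeaklyViable F)
    (hSPP : SPP F) (hSPO : SPO F) :
    (∀ a : A, ∃ b c : A, (rangeGraph F).Adj a b ∧ (rangeGraph F).Adj b c ∧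
      (rangeGraph F).Adj a c) ∧
    (∀ a b : A, (rangeGraph F).Adj a b →
      ∃ c : A, (rangeGraph F).Adj a c ∧ (rangeGraph F).Adj b c) := by
  classical
  have hedge : ∀ P : Profile V A, ∃ u v : A, u ≠ v ∧ F P = {u, v} := by
    intro P
    obtain ⟨u, v, huv, h⟩ := Finset.card_eq_two.mp (hcomm P)
    exact ⟨u, v, huv, h⟩
  have part2 : ∀ a b : A, (rangeGraph F).Adj a b →
      ∃ c : A, (rangeGraph F).Adj a c ∧ (rangeGraph F).Adj b c := by
    intro a b hadj
    by_contra hno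
    push_neg at hno
    obtain ⟨hab, P1, hP1⟩ := hadj
    have hadj' : (rangeGraph F).Adj a b := ⟨hab, P1, hP1⟩
    set Bs : Finset A := Finset.univ.filter (fun x => (rangeGraph F).Adj a x) with hBs
    set Cs : Finset A := Finset.univ.filter (fun x => (rangeGraph F).Adj b x) with hCs
    have memB : ∀ x : A, (rangeGraph F).Adj a x → x ∈ Bs := by
      intro x hx; rw [hBs, Finset.mem_filter]; exact ⟨Finset.mem_univ _, hx⟩
    have memB' : ∀ x : A, x ∈ Bs → (rangeGraph F).Adj a x := by
      intro x hx; rw [hBs, Finset.mem_filter] at hx; exact hx.2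
    have memC : ∀ x : A, (rangeGraph F).Adj b x → x ∈ Cs := by
      intro x hx; rw [hCs, Finset.mem_filter]; exact ⟨Finset.mem_univ _, hx⟩
    have memC' : ∀ x : A, x ∈ Cs → (rangeGraph F).Adj b x := by
      intro x hx; rw [hCs, Finset.mem_filter] at hx; exact hx.2
    have hbB : b ∈ Bs := memB b hadj'
    have haC : a ∈ Cs := memC a hadj'.symm
    have hdisjBC : Disjoint Bs Cs := by
      rw [Finset.disjoint_left]
      intro x hxB hxC
      exact hno x (memB' x hxB) (memC' x hxC)
    -- every committee crosses
    have hcross : ∀ P : Profile V A, ∃ u v, F P = {u, v} ∧ u ∈ Bs ∧ v ∈ Cs := by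
      intro P
      obtain ⟨u, v, huv, hUV⟩ := hedge P
      by_cases hua : u = a
      · by_cases hvb : v = b
        · exact ⟨b, a, by rw [hUV, hua, hvb, Finset.pair_comm], hbB, haC⟩
        · have hav : a ≠ v := by rw [← hua]; exact huv
          have hvB : v ∈ Bs := memB v ⟨hav, P, by rw [← hua]; exact hUV⟩
          exact ⟨v, a, by rw [hUV, hua, Finset.pair_comm], hvB, haC⟩
      by_cases hub : u = b
      · by_cases hva : v = a
        · exact ⟨b, a, by rw [hUV, hub, hva], hbB, haC⟩
        · have hbv : b ≠ v := by rw [← hub]; exact huv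
          have hvC : v ∈ Cs := memC v ⟨hbv, P, by rw [← hub]; exact hUV⟩
          exact ⟨b, v, by rw [hUV, hub], hbB, hvC⟩
      by_cases hva : v = a
      · have hau : a ≠ u := fun he => hua he.symm
        have huB : u ∈ Bs := memB u ⟨hau, P, by rw [hUV, hva, Finset.pair_comm]⟩
        exact ⟨u, a, by rw [hUV, hva], huB, haC⟩
      by_cases hvb : v = b
      · have hbu : b ≠ u := fun he => hub he.symm
        have huC : u ∈ Cs := memC u ⟨hbu, P, by rw [hUV, hvb, Finset.pair_comm]⟩
        exact ⟨b, u, by rw [hUV, hvb, Finset.pair_comm], hbB, huC⟩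
      · -- all four distinct
        have hau : a ≠ u := fun he => hua he.symm
        have hbu : b ≠ u := fun he => hub he.symm
        have hav : a ≠ v := fun he => hva he.symm
        have hbv : b ≠ v := fun he => hvb he.symm
        have h1 := half_ec hcomm hSPO hSPP hab hau hav hbu hbv huv
          ⟨P1, hP1⟩ ⟨P, hUV⟩
        have h2 := half_ec hcomm hSPO hSPP (Ne.symm hab) hbu hbv hau hav huv
          ⟨P1, by rw [hP1, Finset.pair_comm]⟩ ⟨P, hUV⟩
        rcases h2 with h2 | h2 <;> rcases h1 with h1 | h1
        · exact absurd (⟨hbu, h1⟩ : (rangeGraph F).Adj b u) (hno u ⟨hau, h2⟩)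
        · exact ⟨u, v, hUV, memB u ⟨hau, h2⟩, memC v ⟨hbv, h1⟩⟩
        · exact ⟨v, u, by rw [hUV, Finset.pair_comm], memB v ⟨hav, h2⟩, memC u ⟨hbu, h1⟩⟩
        · exact absurd (⟨hbv, h1⟩ : (rangeGraph F).Adj b v) (hno v ⟨hav, h2⟩)
    have hcrossC : ∀ P : Profile V A, ∃ u v, F P = {u, v} ∧ u ∈ Cs ∧ v ∈ Bs := by
      intro P
      obtain ⟨u, v, h1, h2, h3⟩ := hcross P
      exact ⟨v, u, by rw [h1, Finset.pair_comm], h3, h2⟩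
    have hcover : Bs ∪ Cs = Finset.univ := by
      apply Finset.eq_univ_of_forall
      intro x
      obtain ⟨P, hxP⟩ := hviable x
      obtain ⟨u, v, hUV, huB, hvC⟩ := hcross P
      rw [hUV] at hxP
      rw [Finset.mem_union]
      rcases Finset.mem_insert.mp hxP with h1 | h1
      · exact Or.inl (by rw [h1]; exact huB)
      · exact Or.inr (by rw [Finset.mem_singleton.mp h1]; exact hvC)
    -- the two social choice functions
    have hGex : ∀ Q : Profile V {x // x ∈ Bs},
        ∃ u, u ∈ F (fun i => extendBallot Bs (Q i)) ∧ u ∈ Bs := by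
      intro Q
      obtain ⟨u, v, h1, h2, h3⟩ := hcross (fun i => extendBallot Bs (Q i))
      exact ⟨u, by rw [h1]; simp, h2⟩
    have hHex : ∀ Q : Profile V {x // x ∈ Cs},
        ∃ u, u ∈ F (fun i => extendBallot Cs (Q i)) ∧ u ∈ Cs := by
      intro Q
      obtain ⟨u, v, h1, h2, h3⟩ := hcrossC (fun i => extendBallot Cs (Q i))
      exact ⟨u, by rw [h1]; simp, h2⟩
    refine hirred ⟨Bs, Cs, ⟨b, hbB⟩, ⟨a, haC⟩, hdisjBC, hcover,
      (fun Q => ⟨Classical.choose (hGex Q), (Classical.choose_spec (hGex Q)).2⟩),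
      (fun Q => ⟨Classical.choose (hHex Q), (Classical.choose_spec (hHex Q)).2⟩), ?_⟩
    intro P
    obtain ⟨u, v, hUV, huB, hvC⟩ := hcross P
    have huv : u ≠ v := by
      intro he
      rw [he] at huB
      exact (Finset.disjoint_left.mp hdisjBC huB) hvC
    -- the B-winner of P
    have hFPB : F P ∩ Bs = {u} := by
      ext z
      rw [Finset.mem_inter, hUV, Finset.mem_singleton]
      constructor
      · rintro ⟨hz, hzB⟩
        rcases Finset.mem_insert.mp hz with h1 | h1
        · exact h1
        · rw [Finset.mem_singleton.mp h1] at hzB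
          exact absurd hvC (Finset.disjoint_left.mp hdisjBC hzB)
      · intro h1
        rw [h1]
        exact ⟨by simp, huB⟩
    have hFPC : F P ∩ Cs = {v} := by
      ext z
      rw [Finset.mem_inter, hUV, Finset.mem_singleton]
      constructor
      · rintro ⟨hz, hzC⟩
        rcases Finset.mem_insert.mp hz with h1 | h1
        · rw [h1] at hzC
          exact absurd hzC (Finset.disjoint_left.mp hdisjBC huB)
        · exact Finset.mem_singleton.mp h1
      · intro h1
        rw [h1]
        exact ⟨by simp, hvC⟩
    -- well-definedness for B
    have hWB : F (fun i => extendBallot Bs (restrictBallot (P i) Bs)) ∩ Bs = F P ∩ Bs := by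
      refine (cross_winner_eq hcomm hSPO hSPP Bs Cs hdisjBC hcross P _ ?_).symm
      intro i x y hx hy
      rw [extendBallot_lt_iff Bs _ hx hy]
      exact Iff.rfl
    have hWC : F (fun i => extendBallot Cs (restrictBallot (P i) Cs)) ∩ Cs = F P ∩ Cs := by
      refine (cross_winner_eq hcomm hSPO hSPP Cs Bs hdisjBC.symm hcrossC P _ ?_).symm
      intro i x y hx hy
      rw [extendBallot_lt_iff Cs _ hx hy]
      exact Iff.rfl
    have hGu : Classical.choose (hGex (fun i => restrictBallot (P i) Bs)) = u := by
      have hspec := Classical.choose_spec (hGex (fun i => restrictBallot (P i) Bs))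
      have hmem : Classical.choose (hGex (fun i => restrictBallot (P i) Bs)) ∈
          F (fun i => extendBallot Bs (restrictBallot (P i) Bs)) ∩ Bs :=
        Finset.mem_inter.mpr ⟨hspec.1, hspec.2⟩
      rw [hWB, hFPB] at hmem
      exact Finset.mem_singleton.mp hmem
    have hHv : Classical.choose (hHex (fun i => restrictBallot (P i) Cs)) = v := by
      have hspec := Classical.choose_spec (hHex (fun i => restrictBallot (P i) Cs))
      have hmem : Classical.choose (hHex (fun i => restrictBallot (P i) Cs)) ∈
          F (fun i => extendBallot Cs (restrictBallot (P i) Cs)) ∩ Cs :=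
        Finset.mem_inter.mpr ⟨hspec.1, hspec.2⟩
      rw [hWC, hFPC] at hmem
      exact Finset.mem_singleton.mp hmem
    rw [hUV]
    show ({u, v} : Finset A) =
      {(Classical.choose (hGex (fun i => restrictBallot (P i) Bs)) : A),
       (Classical.choose (hHex (fun i => restrictBallot (P i) Cs)) : A)}
    rw [hGu, hHv]
  constructor
  · intro a
    obtain ⟨P, haP⟩ := hviable a
    obtain ⟨u, v, huv, hUV⟩ := hedge P
    rw [hUV] at haP
    rcases Finset.mem_insert.mp haP with h1 | h1
    · have hadj : (rangeGraph F).Adj a v := ⟨by rw [h1]; exact huv, P, by rw [hUV, h1]⟩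
      obtain ⟨c, hc1, hc2⟩ := part2 a v hadj
      exact ⟨v, c, hadj, hc2, hc1⟩
    · have h1' : a = v := Finset.mem_singleton.mp h1
      have hadj : (rangeGraph F).Adj a u :=
        ⟨by rw [h1']; exact Ne.symm huv, P, by rw [hUV, h1', Finset.pair_comm]⟩
      obtain ⟨c, hc1, hc2⟩ := part2 a u hadj
      exact ⟨u, c, hadj, hc2, hc1⟩
  · exact part2
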